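/- Let Λ = k[x, z, s, s^{-1}]/(xz, x³ + z³), char k = 2. There is no k-bilinear map g of degree -1 on Λ such that the Hochschild coboundary equations x·g(z,x²) + g(x,z)·x² = x³, x²·g(x,z) + g(x³,z) + g(x²,x)·z = 0, z·g(x²,x) + g(z,x³) + g(z,x²)·x = 0, z·g(z²,z) + g(z³,z) + g(z,z³) + g(z,z²)·z = 0, and z²·g(z,z) + z·g(z²,z) + z·g(z,z²) + z·g(z,z)·z = 0 all hold; summing them gives the contradiction x³ = 0, while x³ ≠ 0 in Λ. -/

import Mathlib

open MvPolynomial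

/-- `k[x,y][s,s⁻¹]`: Laurent polynomials in `s` over `k[x,y]`. -/
noncomputable abbrev LaurentXY (k : Type) [Field k] : Type :=
  LaurentPolynomial (MvPolynomial (Fin 2) k)

/-- The Tate cohomology ring of `Q_{4t}`, `t ≥ 4`:
`Λ = k[x,y,s,s⁻¹]/(y³, x² + xy)`. -/
noncomputable abbrev LamQt (k : Type) [Field k] : Type :=
  LaurentXY k ⧸ (Ideal.span
    {LaurentPolynomial.C ((X 1 : MvPolynomial (Fin 2) k) ^ 3),
     LaurentPolynomial.C (X 0 ^ 2 + X 0 * X 1)} : Ideal (LaurentXY k))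

/-- `Λ` in the variables `x, z`: `k[x,z,s,s⁻¹]/(xz, x³ + z³)`. -/
noncomputable abbrev LamXZ (k : Type) [Field k] : Type :=
  LaurentXY k ⧸ (Ideal.span
    {LaurentPolynomial.C ((X 0 : MvPolynomial (Fin 2) k) * X 1),
     LaurentPolynomial.C ((X 0 : MvPolynomial (Fin 2) k) ^ 3 + X 1 ^ 3)} : Ideal (LaurentXY k))

/-- The class of `x` in `LamQt`. -/
noncomputable def tx (k : Type) [Field k] : LamQt k :=
  Ideal.Quotient.mk _ (LaurentPolynomial.C (X 0))
/-- The class of `y` in `LamQt`. -/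
noncomputable def ty (k : Type) [Field k] : LamQt k :=
  Ideal.Quotient.mk _ (LaurentPolynomial.C (X 1))
/-- The class of `x` in `LamXZ`. -/
noncomputable def wx (k : Type) [Field k] : LamXZ k :=
  Ideal.Quotient.mk _ (LaurentPolynomial.C (X 0))
/-- The class of `z` in `LamXZ`. -/
noncomputable def wz (k : Type) [Field k] : LamXZ k :=
  Ideal.Quotient.mk _ (LaurentPolynomial.C (X 1))

set_option maxHeartbeats 2000000

/-! Once `x³ = z³` is substituted, every `g`-term occurs exactly twice in the sum of the five
equations, so in characteristic 2 the sum reads `x³ = 0`. On the other hand `x³ ≠ 0` in `Λ`: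
evaluating at `s = 1` reduces this to `k[x,z]`, where every element of `(xz, x³ + z³)` has equal
coefficients at `x³` and at `z³`. -/

theorem Ideal.mem_span_of_map_mem_span_image {R S : Type*} [CommSemiring R] [Semiring S]
    {f : R →+* S} {g : S →+* R} (hgf : ∀ a, g (f a) = a) {s : Set R} {a : R}
    (h : f a ∈ Ideal.span (f '' s)) : a ∈ Ideal.span s := by
  simpa only [Ideal.map_span, Set.image_image, hgf, Set.image_id'] using Ideal.mem_map_of_mem g h

theorem MvPolynomial.X_zero_pow_three_notMem_span {R : Type*} [CommRing R] [Nontrivial R] :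
    (X 0 : MvPolynomial (Fin 2) R) ^ 3 ∉ Ideal.span {X 0 * X 1, X 0 ^ 3 + X 1 ^ 3} := by
  rw [Ideal.mem_span_pair]
  rintro ⟨p, q, h⟩
  have hp (i : Fin 2) : coeff (Finsupp.single i 3) (p * (X 0 * X 1)) = 0 := by
    fin_cases i <;> simp [← mul_assoc, coeff_mul_X']
  have hq (i : Fin 2) : coeff (Finsupp.single i 3) (q * (X 0 ^ 3 + X 1 ^ 3)) = coeff 0 q := by
    fin_cases i <;> simp [mul_add, X_pow_eq_monomial, coeff_mul_monomial', Finsupp.single_le_iff]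
  have hx : coeff 0 q = 1 := by
    simpa [hp, hq, coeff_X_pow] using congrArg (coeff (Finsupp.single 0 3)) h
  have hz : coeff 0 q = 0 := by
    simpa [hp, hq, coeff_X_pow, Finsupp.single_eq_single_iff] using
      congrArg (coeff (Finsupp.single 1 3)) h
  exact one_ne_zero (hx.symm.trans hz)

theorem wx_pow_three_ne_zero (k : Type) [Field k] : wx k ^ 3 ≠ 0 := by
  intro h
  rw [wx, ← map_pow, ← map_pow, Ideal.Quotient.eq_zero_iff_mem, ← Set.image_pair] at h
  exact MvPolynomial.X_zero_pow_three_notMem_span <| Ideal.mem_span_of_map_mem_span_image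
    (g := LaurentPolynomial.eval₂ (RingHom.id _) 1) (LaurentPolynomial.eval₂_C _ _) h

instance (k : Type) [Field k] : Nontrivial (LamXZ k) :=
  nontrivial_of_ne _ _ (wx_pow_three_ne_zero k)

instance (k : Type) [Field k] [CharP k 2] : CharP (LamXZ k) 2 :=
  charP_of_injective_algebraMap' k 2

theorem wx_pow_three_eq_wz_pow_three (k : Type) [Field k] [CharP k 2] :
    wx k ^ 3 = wz k ^ 3 := by
  rw [← CharTwo.add_eq_zero, wx, wz, ← map_pow, ← map_pow, ← map_pow, ← map_pow, ← map_add,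
    Ideal.Quotient.eq_zero_iff_mem, ← map_add]
  exact Ideal.subset_span (by simp)

theorem pow_three_eq_zero_of_hochschild_eqs {R : Type*} [CommRing R] [CharP R 2]
    (g : R → R → R) {x z : R} (hxz : x ^ 3 = z ^ 3)
    (h1 : x * g z (x ^ 2) + g x z * x ^ 2 = x ^ 3)
    (h2 : x ^ 2 * g x z + g (x ^ 3) z + g (x ^ 2) x * z = 0)
    (h3 : z * g (x ^ 2) x + g z (x ^ 3) + g z (x ^ 2) * x = 0)
    (h4 : z * g (z ^ 2) z + g (z ^ 3) z + g z (z ^ 3) + g z (z ^ 2) * z = 0)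
    (h5 : z ^ 2 * g z z + z * g (z ^ 2) z + z * g z (z ^ 2) + z * g z z * z = 0) :
    x ^ 3 = 0 := by
  rw [hxz] at h2 h3
  linear_combination -(h1 + h2 + h3 + h4 + h5) +
    (x * g z (x ^ 2) + g x z * x ^ 2 + g (z ^ 3) z + g (x ^ 2) x * z + g z (z ^ 3)
      + z * g (z ^ 2) z + g z (z ^ 2) * z + z ^ 2 * g z z) * CharTwo.two_eq_zero (R := R)

/-- in `Λ = k[x,z,s,s⁻¹]/(xz, x³+z³)` one has `x³ ≠ 0`, and there
is no `k`-bilinear `g` (of degree `-1`) satisfying the five listed Hochschild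
coboundary equations (summing them would give the contradiction `x³ = 0`). -/
theorem stmt_14 (k : Type) [Field k] [CharP k 2] :
    wx k ^ 3 ≠ 0 ∧
    ¬ ∃ g : LamXZ k →ₗ[k] LamXZ k →ₗ[k] LamXZ k,
      (wx k * g (wz k) (wx k ^ 2) + g (wx k) (wz k) * wx k ^ 2 = wx k ^ 3) ∧
      (wx k ^ 2 * g (wx k) (wz k) + g (wx k ^ 3) (wz k) + g (wx k ^ 2) (wx k) * wz k = 0) ∧
      (wz k * g (wx k ^ 2) (wx k) + g (wz k) (wx k ^ 3) + g (wz k) (wx k ^ 2) * wx k = 0) ∧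
      (wz k * g (wz k ^ 2) (wz k) + g (wz k ^ 3) (wz k) + g (wz k) (wz k ^ 3)
        + g (wz k) (wz k ^ 2) * wz k = 0) ∧
      (wz k ^ 2 * g (wz k) (wz k) + wz k * g (wz k ^ 2) (wz k) + wz k * g (wz k) (wz k ^ 2)
        + wz k * g (wz k) (wz k) * wz k = 0) := by
  refine ⟨wx_pow_three_ne_zero k, ?_⟩
  rintro ⟨g, h1, h2, h3, h4, h5⟩
  exact wx_pow_three_ne_zero k <| pow_three_eq_zero_of_hochschild_eqs (fun a b => g a b)
    (wx_pow_three_eq_wz_pow_three k) h1 h2 h3 h4 h5
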